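/- arXiv:2009.14488 — 9 statements merged into one kernel-verified Lean document; each statement's English description precedes it below -/
import Mathlib

section
/- Let m ≥ 1 be an integer, δ_1,…,δ_m ∈ {+1,−1}, and let δ be the (+1,δ_1,…,δ_m)-Thue–Morse sequence. If |p(m+1)| > 1, then there exists a unique nonempty compact set K ⊆ ℂ such that the rescaled polygonal paths (p(m+1))^{−n}·P(n) converge to K in the Hausdorff metric as n → ∞, and moreover K is a continuous image of the interval [0,1] (i.e. there is a continuous map f : [0,1] → ℂ with K = f([0,1])). -/
/-!
Write `γ` for the polygonal path through `p 0, p 1, …` at integer times and `λ = p (m + 1)`.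
The digit recursion of `δ` and `ζ ^ m = 1` for `ζ = exp (2πi/m)` give the self-similarity
`p ((m + 1) q) = λ p q`, and the steps of `p` have length one, so `γ` is 1-Lipschitz and
`γ ((m + 1) s) - λ γ s` stays bounded. Hence the arcs `t ↦ λ⁻ⁿ γ ((m + 1)ⁿ t)` on `[0, 1]`,
whose images are `λ⁻ⁿ P(n)`, move by `O(|λ|⁻ⁿ)` in the sup norm from one `n` to the next; they
converge uniformly to an arc `f`, so their images converge to `f([0, 1])` in the Hausdorff
metric. Uniqueness holds because the Hausdorff distance is a metric on nonempty compact sets.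
-/

open Complex Filter Metric Set
open scoped Real Topology Pointwise
open scoped NNReal

theorem dist_le_mul_of_dist_succ_le {α : Type*} [PseudoMetricSpace α] {f : ℕ → α} {L : ℝ}
    (h : ∀ k, dist (f k) (f (k + 1)) ≤ L) {a b : ℕ} (hab : a ≤ b) :
    dist (f a) (f b) ≤ L * (b - a) := by
  have := dist_le_Ico_sum_of_dist_le (f := f) hab (d := fun _ => L) fun _ _ => h _
  rwa [Finset.sum_const, Nat.card_Ico, nsmul_eq_mul, Nat.cast_sub hab, mul_comm] at this

section PolygonalPath

variable {E : Type*} [NormedAddCommGroup E] [NormedSpace ℝ E] (p : ℕ → E)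

noncomputable def polygonalPath (t : ℝ) : E :=
  AffineMap.lineMap (p ⌊t⌋₊) (p (⌊t⌋₊ + 1)) (t - ⌊t⌋₊)

theorem polygonalPath_eq_lineMap {k : ℕ} {t : ℝ} (ht : t ∈ Icc (k : ℝ) (k + 1)) :
    polygonalPath p t = AffineMap.lineMap (p k) (p (k + 1)) (t - k) := by
  rcases ht.2.lt_or_eq with hlt | rfl
  · rw [polygonalPath, (Nat.floor_eq_iff (k.cast_nonneg.trans ht.1)).2 ⟨ht.1, hlt⟩]
  · have hfloor : ⌊(k : ℝ) + 1⌋₊ = k + 1 := by exact_mod_cast Nat.floor_natCast (k + 1)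
    simp [polygonalPath, hfloor]

theorem polygonalPath_natCast (k : ℕ) : polygonalPath p k = p k := by
  simp [polygonalPath_eq_lineMap p (k := k) ⟨le_rfl, by linarith⟩]

theorem polygonalPath_image_Icc_natCast (k : ℕ) :
    polygonalPath p '' Icc (k : ℝ) (k + 1) = segment ℝ (p k) (p (k + 1)) := by
  have : polygonalPath p '' Icc (k : ℝ) (k + 1) =
      AffineMap.lineMap (p k) (p (k + 1)) '' ((· - (k : ℝ)) '' Icc (k : ℝ) (k + 1)) := by
    rw [image_image]
    exact image_congr fun t ht => polygonalPath_eq_lineMap p ht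
  rw [this, image_sub_const_Icc, sub_self, add_sub_cancel_left, segment_eq_image_lineMap]

theorem polygonalPath_image_Icc_zero {N : ℕ} (hN : 1 ≤ N) :
    polygonalPath p '' Icc 0 (N : ℝ) = ⋃ k ∈ Finset.Icc 1 N, segment ℝ (p (k - 1)) (p k) := by
  ext z
  simp only [mem_iUnion, Finset.mem_Icc, exists_prop]
  constructor
  · rintro ⟨t, ⟨ht0, htN⟩, rfl⟩
    refine ⟨min ⌊t⌋₊ (N - 1) + 1, ⟨by omega, by omega⟩, ?_⟩
    rw [Nat.add_sub_cancel, ← polygonalPath_image_Icc_natCast]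
    refine mem_image_of_mem _ ⟨(Nat.cast_le.2 (min_le_left _ _)).trans (Nat.floor_le ht0), ?_⟩
    rcases min_choice ⌊t⌋₊ (N - 1) with h | h <;> rw [h]
    · exact (Nat.lt_floor_add_one t).le
    · rw [Nat.cast_sub hN, Nat.cast_one]; linarith
  · rintro ⟨k, ⟨hk1, hkN⟩, hz⟩
    obtain ⟨j, rfl⟩ : ∃ j, k = j + 1 := ⟨k - 1, by omega⟩
    rw [Nat.add_sub_cancel, ← polygonalPath_image_Icc_natCast] at hz
    exact image_mono (Icc_subset_Icc j.cast_nonneg (by exact_mod_cast hkN)) hz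

variable {p}

theorem lipschitzWith_polygonalPath {L : ℝ≥0} (h : ∀ k, dist (p k) (p (k + 1)) ≤ L) :
    LipschitzWith L (polygonalPath p) := by
  have hle : ∀ s t, s ≤ t → dist (polygonalPath p s) (polygonalPath p t) ≤ L * (t - s) := by
    intro s t hst
    obtain ⟨a, ha⟩ : ∃ a, ⌊s⌋₊ = a := ⟨_, rfl⟩
    obtain ⟨b, hb⟩ : ∃ b, ⌊t⌋₊ = b := ⟨_, rfl⟩
    have hs : s < a + 1 := ha ▸ Nat.lt_floor_add_one s
    rcases (ha ▸ hb ▸ Nat.floor_le_floor hst : a ≤ b).eq_or_lt with rfl | hab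
    · rw [polygonalPath, polygonalPath, ha, hb, dist_lineMap_lineMap, Real.dist_eq,
        abs_of_nonpos (by linarith), mul_comm]
      exact mul_le_mul (h a) (by linarith) (by linarith) L.2
    · have hbt : (b : ℝ) ≤ t := hb ▸ Nat.floor_le (by
        have := Nat.floor_pos.1 (hb ▸ Nat.zero_lt_of_lt hab); linarith)
      have hleft : dist (polygonalPath p s) (p (a + 1)) ≤ L * (a + 1 - s) := by
        rw [polygonalPath, ha, dist_lineMap_right, Real.norm_eq_abs,
          abs_of_nonneg (by linarith), mul_comm]
        exact (mul_le_mul_of_nonneg_right (h a) (by linarith)).trans_eq (by ring)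
      have hright : dist (p b) (polygonalPath p t) ≤ L * (t - b) := by
        rw [polygonalPath, hb, dist_left_lineMap, Real.norm_eq_abs,
          abs_of_nonneg (by linarith), mul_comm]
        exact mul_le_mul_of_nonneg_right (h b) (by linarith)
      have hmid := dist_le_mul_of_dist_succ_le h (Nat.succ_le_of_lt hab)
      push_cast at hmid
      calc dist (polygonalPath p s) (polygonalPath p t)
          ≤ dist (polygonalPath p s) (p (a + 1)) + dist (p (a + 1)) (p b)
            + dist (p b) (polygonalPath p t) := dist_triangle4 _ _ _ _
        _ ≤ L * (a + 1 - s) + L * (b - (a + 1)) + L * (t - b) := by gcongr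
        _ = L * (t - s) := by ring
  refine LipschitzWith.of_dist_le_mul fun s t => ?_
  rcases le_total s t with hst | hst
  · rw [dist_comm s, Real.dist_eq, abs_of_nonneg (by linarith)]; exact hle s t hst
  · rw [dist_comm, Real.dist_eq, abs_of_nonneg (by linarith)]; exact hle t s hst

end PolygonalPath

section Rescaling

variable {γ : ℝ → ℂ} {L : ℝ≥0} {M : ℕ} {c : ℂ}

theorem norm_comp_mul_sub_mul_le (hγ : LipschitzWith L γ)
    (hself : ∀ q : ℕ, γ (M * q) = c * γ q) {s : ℝ} (hs : 0 ≤ s) :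
    ‖γ (M * s) - c * γ s‖ ≤ L * (M + ‖c‖) := by
  have h0 : 0 ≤ s - ⌊s⌋₊ := sub_nonneg.2 (Nat.floor_le hs)
  have h1 : s - ⌊s⌋₊ ≤ 1 := by linarith [Nat.lt_floor_add_one s]
  have hfar : ‖γ (M * s) - γ (M * ⌊s⌋₊)‖ ≤ L * (M * (s - ⌊s⌋₊)) := by
    rw [← dist_eq_norm, ← abs_of_nonneg (mul_nonneg M.cast_nonneg h0), mul_sub, ← Real.dist_eq]
    exact hγ.dist_le_mul _ _
  have hnear : ‖γ ⌊s⌋₊ - γ s‖ ≤ L * (s - ⌊s⌋₊) := by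
    rw [← dist_eq_norm, dist_comm, ← abs_of_nonneg h0, ← Real.dist_eq]
    exact hγ.dist_le_mul _ _
  calc ‖γ (M * s) - c * γ s‖
      = ‖(γ (M * s) - γ (M * ⌊s⌋₊)) + c * (γ ⌊s⌋₊ - γ s)‖ := by rw [hself]; ring_nf
    _ ≤ ‖γ (M * s) - γ (M * ⌊s⌋₊)‖ + ‖c‖ * ‖γ ⌊s⌋₊ - γ s‖ := by
      rw [← norm_mul]; exact norm_add_le _ _
    _ ≤ L * (M * (s - ⌊s⌋₊)) + ‖c‖ * (L * (s - ⌊s⌋₊)) := by gcongr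
    _ ≤ L * (M * 1) + ‖c‖ * (L * 1) := by gcongr
    _ = L * (M + ‖c‖) := by ring

noncomputable def rescaledArc (γ : C(ℝ, ℂ)) (M : ℕ) (c : ℂ) (n : ℕ) : C(Icc (0 : ℝ) 1, ℂ) where
  toFun x := (c ^ n)⁻¹ * γ (M ^ n * x)

theorem range_rescaledArc (γ : C(ℝ, ℂ)) (M : ℕ) (c : ℂ) (n : ℕ) :
    range (rescaledArc γ M c n) = (c ^ n)⁻¹ • γ '' Icc 0 ((M : ℝ) ^ n) := by
  have hscale : Icc 0 ((M : ℝ) ^ n) = (fun x => (M : ℝ) ^ n * x) '' Icc 0 1 := by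
    rw [image_mul_left_Icc (by positivity) zero_le_one, mul_zero, mul_one]
  rw [hscale, ← image_smul, image_image, image_image, image_eq_range]
  rfl

theorem dist_rescaledArc_succ_le {γ : C(ℝ, ℂ)} (hγ : LipschitzWith L γ)
    (hself : ∀ q : ℕ, γ (M * q) = c * γ q) (hc : c ≠ 0) (n : ℕ) :
    dist (rescaledArc γ M c n) (rescaledArc γ M c (n + 1)) ≤
      L * (M + ‖c‖) / ‖c‖ * ‖c‖⁻¹ ^ n := by
  refine (ContinuousMap.dist_le (by positivity)).2 fun x => ?_
  have hs : 0 ≤ (M : ℝ) ^ n * x := mul_nonneg (by positivity) x.2.1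
  have key := norm_comp_mul_sub_mul_le hγ hself hs
  calc dist (rescaledArc γ M c n x) (rescaledArc γ M c (n + 1) x)
      = ‖c‖⁻¹ ^ (n + 1) * ‖γ (M * (M ^ n * x)) - c * γ (M ^ n * x)‖ := by
        rw [dist_comm, dist_eq_norm, ← norm_inv, ← norm_pow, ← norm_mul]
        congr 1
        simp only [rescaledArc, ContinuousMap.coe_mk]
        rw [inv_pow, pow_succ, pow_succ, mul_assoc]
        field_simp
    _ ≤ ‖c‖⁻¹ ^ (n + 1) * (L * (M + ‖c‖)) := by gcongr
    _ = L * (M + ‖c‖) / ‖c‖ * ‖c‖⁻¹ ^ n := by ring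

theorem exists_tendsto_rescaledArc {γ : C(ℝ, ℂ)} (hγ : LipschitzWith L γ)
    (hself : ∀ q : ℕ, γ (M * q) = c * γ q) (hc : 1 < ‖c‖) :
    ∃ f, Tendsto (rescaledArc γ M c) atTop (𝓝 f) :=
  cauchySeq_tendsto_of_complete <| cauchySeq_of_le_geometric _ _ (inv_lt_one_of_one_lt₀ hc)
    (dist_rescaledArc_succ_le hγ hself (norm_pos_iff.1 (one_pos.trans hc)))

end Rescaling

section Hausdorff

variable {X : Type*} [MetricSpace X]

theorem hausdorffDist_range_le_dist {Y : Type*} [TopologicalSpace Y] [CompactSpace Y]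
    (f g : C(Y, X)) : hausdorffDist (range f) (range g) ≤ dist f g :=
  hausdorffDist_le_of_mem_dist dist_nonneg
    (forall_mem_range.2 fun y => ⟨g y, mem_range_self y, ContinuousMap.dist_apply_le_dist y⟩)
    (forall_mem_range.2 fun y =>
      ⟨f y, mem_range_self y, (dist_comm _ _).trans_le (ContinuousMap.dist_apply_le_dist y)⟩)

theorem tendsto_hausdorffDist_range {Y ι : Type*} [TopologicalSpace Y] [CompactSpace Y]
    {l : Filter ι} {F : ι → C(Y, X)} {f : C(Y, X)} (h : Tendsto F l (𝓝 f)) :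
    Tendsto (fun i => hausdorffDist (range (F i)) (range f)) l (𝓝 0) :=
  squeeze_zero (fun _ => hausdorffDist_nonneg) (fun i => hausdorffDist_range_le_dist (F i) f)
    (tendsto_iff_dist_tendsto_zero.1 h)

theorem eq_of_tendsto_hausdorffDist {ι : Type*} {l : Filter ι} [l.NeBot] {A : ι → Set X}
    {K K' : Set X} (hA : ∀ i, IsCompact (A i)) (hAne : ∀ i, (A i).Nonempty)
    (hK : IsCompact K) (hKne : K.Nonempty) (hK' : IsCompact K') (hK'ne : K'.Nonempty)
    (h : Tendsto (fun i => hausdorffDist (A i) K) l (𝓝 0))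
    (h' : Tendsto (fun i => hausdorffDist (A i) K') l (𝓝 0)) : K = K' := by
  let a i : TopologicalSpace.NonemptyCompacts X := ⟨⟨A i, hA i⟩, hAne i⟩
  have hlim : ∀ k : TopologicalSpace.NonemptyCompacts X,
      Tendsto (fun i => hausdorffDist (A i) k) l (𝓝 0) → Tendsto a l (𝓝 k) :=
    fun _ hk => tendsto_iff_dist_tendsto_zero.2 hk
  exact congrArg SetLike.coe
    (tendsto_nhds_unique (hlim ⟨⟨K, hK⟩, hKne⟩ h) (hlim ⟨⟨K', hK'⟩, hK'ne⟩ h'))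

end Hausdorff

theorem sum_range_succ_mul_eq_mul_sum {R : Type*} [CommSemiring R] {m : ℕ} {d : ℕ → R} {ζ : R}
    (hζ : ζ ^ m = 1) (hd : ∀ q k, k ≤ m → d ((m + 1) * q + k) = d q * d k) (q : ℕ) :
    ∑ k ∈ Finset.range ((m + 1) * q), d k * ζ ^ k =
      (∑ k ∈ Finset.range (m + 1), d k * ζ ^ k) * ∑ k ∈ Finset.range q, d k * ζ ^ k := by
  induction q with
  | zero => simp
  | succ q ih =>
    have hblock : ∑ k ∈ Finset.range (m + 1), d ((m + 1) * q + k) * ζ ^ ((m + 1) * q + k) =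
        (∑ k ∈ Finset.range (m + 1), d k * ζ ^ k) * (d q * ζ ^ q) := by
      rw [Finset.sum_mul]
      refine Finset.sum_congr rfl fun k hk => ?_
      rw [hd q k (Nat.lt_succ_iff.1 (Finset.mem_range.1 hk)), pow_add, add_mul, one_mul,
        pow_add, pow_mul, hζ, one_pow, one_mul]
      ring
    rw [mul_add_one, Finset.sum_range_add, ih, hblock, Finset.sum_range_succ _ q, mul_add]

theorem exists_tendsto_hausdorffDist_polygonalPath {p : ℕ → ℂ} {L : ℝ≥0}
    (hstep : ∀ k, dist (p k) (p (k + 1)) ≤ L) {M : ℕ} {c : ℂ}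
    (hself : ∀ q, p (M * q) = c * p q) (hc : 1 < ‖c‖) :
    ∃ K : Set ℂ, K.Nonempty ∧ IsCompact K ∧
      Tendsto (fun n => hausdorffDist ((c ^ n)⁻¹ • polygonalPath p '' Icc 0 ((M : ℝ) ^ n)) K)
        atTop (𝓝 0) ∧
      (∀ K' : Set ℂ, K'.Nonempty → IsCompact K' →
        Tendsto (fun n => hausdorffDist ((c ^ n)⁻¹ • polygonalPath p '' Icc 0 ((M : ℝ) ^ n)) K')
          atTop (𝓝 0) → K' = K) ∧
      ∃ f : ℝ → ℂ, ContinuousOn f (Icc 0 1) ∧ f '' Icc 0 1 = K := by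
  have hγ := lipschitzWith_polygonalPath hstep
  let γ : C(ℝ, ℂ) := ⟨polygonalPath p, hγ.continuous⟩
  obtain ⟨f, hf⟩ := exists_tendsto_rescaledArc (γ := γ) hγ
    (fun q => by simpa only [γ, ContinuousMap.coe_mk, ← Nat.cast_mul, polygonalPath_natCast]
      using hself q) hc
  have hconv := tendsto_hausdorffDist_range hf
  simp only [range_rescaledArc] at hconv
  refine ⟨range f, range_nonempty f, isCompact_range f.continuous, hconv,
    fun K' hK'ne hK' hK'conv => eq_of_tendsto_hausdorffDist
      (fun n => range_rescaledArc γ M c n ▸ isCompact_range (ContinuousMap.continuous _))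
      (fun n => range_rescaledArc γ M c n ▸ range_nonempty _) hK' hK'ne
      (isCompact_range f.continuous) (range_nonempty f) hK'conv hconv,
    IccExtend zero_le_one f, f.continuous.Icc_extend'.continuousOn, ?_⟩
  rw [IccExtend, image_comp, (projIcc_surjOn zero_le_one).image_eq_of_mapsTo (mapsTo_univ _ _),
    image_univ]

theorem generalized_koch_curve_exists_unique_general
    (m : ℕ) (hm : 1 ≤ m)
    (δ : ℕ → ℝ)
    (hδpm : ∀ n, δ n = 1 ∨ δ n = -1)
    (hδrec : ∀ q k, k ≤ m → δ ((m + 1) * q + k) = δ q * δ k)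
    (p : ℕ → ℂ)
    (hp : ∀ n, p n = ∑ k ∈ Finset.range n,
      (δ k : ℂ) * Complex.exp (2 * Real.pi * Complex.I * k / m))
    (P : ℕ → Set ℂ)
    (hP : ∀ n, P n = ⋃ k ∈ Finset.Icc 1 ((m + 1) ^ n), segment ℝ (p (k - 1)) (p k))
    (hbig : 1 < ‖p (m + 1)‖) :
    ∃ K : Set ℂ, K.Nonempty ∧ IsCompact K ∧
      Tendsto (fun n => hausdorffDist (((p (m + 1)) ^ n)⁻¹ • P n) K) atTop (𝓝 0) ∧
      (∀ K' : Set ℂ, K'.Nonempty → IsCompact K' →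
        Tendsto (fun n => hausdorffDist (((p (m + 1)) ^ n)⁻¹ • P n) K') atTop (𝓝 0) →
        K' = K) ∧
      ∃ f : ℝ → ℂ, ContinuousOn f (Set.Icc 0 1) ∧ f '' Set.Icc 0 1 = K := by
  set ζ : ℂ := exp (2 * π * I / m)
  have hζ : ζ ^ m = 1 := (isPrimitiveRoot_exp m (by omega)).pow_eq_one
  have hpζ : ∀ n, p n = ∑ k ∈ Finset.range n, (δ k : ℂ) * ζ ^ k := fun n => by
    rw [hp]
    refine Finset.sum_congr rfl fun k _ => ?_
    rw [← exp_nat_mul]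
    ring_nf
  have hself : ∀ q, p ((m + 1) * q) = p (m + 1) * p q := fun q => by
    simp only [hpζ]
    exact sum_range_succ_mul_eq_mul_sum hζ (fun q k hk => by rw [hδrec q k hk]; push_cast; rfl) q
  have hstep : ∀ k, dist (p k) (p (k + 1)) ≤ (1 : ℝ≥0) := fun k => by
    rw [hpζ, hpζ, Finset.sum_range_succ, dist_self_add_right, norm_mul, norm_pow,
      norm_eq_one_of_pow_eq_one hζ (by omega), one_pow, mul_one]
    rcases hδpm k with h | h <;> simp [h]
  have hPn : ∀ n, P n = polygonalPath p '' Icc 0 (((m + 1 : ℕ) : ℝ) ^ n) := fun n => by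
    rw [hP, ← Nat.cast_pow, polygonalPath_image_Icc_zero p (Nat.one_le_pow _ _ (by omega))]
  simp only [hPn]
  exact exists_tendsto_hausdorffDist_polygonalPath hstep hself hbig

/-- For the generalized Thue–Morse sequence `δ` with `|p(m+1)| > 1`, there is a
unique nonempty compact `K ⊆ ℂ` to which the rescaled polygonal paths
`(p(m+1))⁻ⁿ • P(n)` converge in the Hausdorff metric, and `K` is a continuous image
of `[0,1]`. -/
theorem generalized_koch_curve_exists_unique
    (m : ℕ) (hm : 1 ≤ m)
    (δ : ℕ → ℝ) (hδ0 : δ 0 = 1)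
    (hδpm : ∀ n, δ n = 1 ∨ δ n = -1)
    (hδrec : ∀ q k, k ≤ m → δ ((m + 1) * q + k) = δ q * δ k)
    (p : ℕ → ℂ)
    (hp : ∀ n, p n = ∑ k ∈ Finset.range n,
      (δ k : ℂ) * Complex.exp (2 * Real.pi * Complex.I * k / m))
    (P : ℕ → Set ℂ)
    (hP : ∀ n, P n = ⋃ k ∈ Finset.Icc 1 ((m + 1) ^ n), segment ℝ (p (k - 1)) (p k))
    (hbig : 1 < ‖p (m + 1)‖) :
    ∃ K : Set ℂ, K.Nonempty ∧ IsCompact K ∧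
      Tendsto (fun n => hausdorffDist (((p (m + 1)) ^ n)⁻¹ • P n) K) atTop (𝓝 0) ∧
      (∀ K' : Set ℂ, K'.Nonempty → IsCompact K' →
        Tendsto (fun n => hausdorffDist (((p (m + 1)) ^ n)⁻¹ • P n) K') atTop (𝓝 0) →
        K' = K) ∧
      ∃ f : ℝ → ℂ, ContinuousOn f (Set.Icc 0 1) ∧ f '' Set.Icc 0 1 = K :=
  generalized_koch_curve_exists_unique_general m hm δ hδpm hδrec p hp P hP hbig
end

section
/- Let m ≥ 2 be an integer and let δ be the (+1,δ_1,…,δ_m)-Thue–Morse sequence with δ_k = +1 for 0 ≤ k ≤ ⌊m/4⌋, δ_k = −1 for ⌊m/4⌋+1 ≤ k ≤ m−⌊m/4⌋−1, and δ_k = +1 for m−⌊m/4⌋ ≤ k ≤ m. Then p(m+1) = Σ_{k=0}^m δ_k e^{2kπi/m} is a real number and 3 ≤ p(m+1) ≤ m+1. -/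
open Complex Finset ComplexConjugate
open scoped Real

/-!
Write `ζ = e^{2πi/m}`, `j = ⌊m/4⌋` and `U = ζ + ⋯ + ζ^j`. The sign pattern is palindromic and
`ζ^{m-k} = conj ζ^k`, so the two outer blocks contribute `1 + U` and `conj U + 1`, while the
middle block, by `1 + ζ + ⋯ + ζ^{m-1} = 0`, contributes `1 + U + conj U`. Hence
`p(m+1) = 3 + 4 Re U`, which is real and at least `3` because every angle `2πk/m` with
`k ≤ m/4` lies in `[0, π/2]`. The upper bound is the triangle inequality.
-/

lemma Complex.exp_two_pi_mul_I_mul_div (k m : ℕ) :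
    exp (2 * π * I * k / m) = exp (2 * π * I / m) ^ k := by
  rw [← exp_nat_mul]
  ring_nf

lemma Complex.re_exp_two_pi_mul_I_div_pow_nonneg {k m : ℕ} (hk : 4 * k ≤ m) :
    0 ≤ (exp (2 * π * I / m) ^ k).re := by
  have hangle : 2 * π * I * k / m = ((2 * π * k / m : ℝ) : ℂ) * I := by push_cast; ring
  rw [← exp_two_pi_mul_I_mul_div, hangle, exp_ofReal_mul_I_re]
  have hk' : (4 * k : ℝ) ≤ m := by exact_mod_cast hk
  refine Real.cos_nonneg_of_mem_Icc
    ⟨by linarith [Real.pi_pos, show 0 ≤ 2 * π * k / m by positivity],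
      div_le_of_le_mul₀ (by positivity) (by positivity) (by nlinarith [Real.pi_pos])⟩

namespace IsPrimitiveRoot

variable {ζ : ℂ} {m : ℕ}

lemma pow_sub_eq_conj (hζ : IsPrimitiveRoot ζ m) (hm : m ≠ 0) {k : ℕ} (hk : k ≤ m) :
    ζ ^ (m - k) = conj (ζ ^ k) := by
  have hnorm : ‖ζ ^ k‖ = 1 := by rw [norm_pow, hζ.norm'_eq_one hm, one_pow]
  rw [pow_sub₀ ζ (hζ.ne_zero hm) hk, hζ.pow_eq_one, one_mul, inv_eq_conj hnorm]

lemma sum_Ico_sub_pow_eq_conj (hζ : IsPrimitiveRoot ζ m) (hm : m ≠ 0) {j : ℕ} (hj : j ≤ m) :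
    ∑ k ∈ Ico (m - j) m, ζ ^ k = conj (∑ k ∈ Ico 1 (j + 1), ζ ^ k) := by
  have hreflect := sum_Ico_reflect (fun k ↦ ζ ^ k) 1 (by omega : j + 1 ≤ m + 1)
  rw [show m + 1 - (j + 1) = m - j by omega, Nat.add_sub_cancel] at hreflect
  rw [← hreflect, map_sum]
  exact sum_congr rfl fun k hk ↦ hζ.pow_sub_eq_conj hm (by simp at hk; omega)

end IsPrimitiveRoot

namespace SignPattern

variable {m j : ℕ} {δ : ℕ → ℝ}
  (h₁ : ∀ k, k ≤ j → δ k = 1)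
  (h₂ : ∀ k, j + 1 ≤ k → k ≤ m - j - 1 → δ k = -1)
  (h₃ : ∀ k, m - j ≤ k → k ≤ m → δ k = 1)
include h₁ h₂ h₃

lemma abs_eq_one_of_le {k : ℕ} (hk : k ≤ m) : |δ k| = 1 := by
  by_cases hlow : k ≤ j
  · simp [h₁ k hlow]
  by_cases hmid : k ≤ m - j - 1
  · simp [h₂ k (by omega) hmid]
  · simp [h₃ k (by omega) hk]

lemma sum_mul_pow_eq_three_add_four_mul_re {ζ : ℂ} (hζ : IsPrimitiveRoot ζ m) (hm : 1 < m)
    (hj : 2 * j < m) :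
    ∑ k ∈ range (m + 1), (δ k : ℂ) * ζ ^ k =
      ((3 + 4 * (∑ k ∈ Ico 1 (j + 1), ζ ^ k).re : ℝ) : ℂ) := by
  set U := ∑ k ∈ Ico 1 (j + 1), ζ ^ k
  have houter : ∑ k ∈ Ico (m - j) m, ζ ^ k = conj U :=
    hζ.sum_Ico_sub_pow_eq_conj (by omega) (by omega)
  have hhead : ∑ k ∈ Ico 0 (j + 1), ζ ^ k = 1 + U := by
    rw [sum_eq_sum_Ico_succ_bot (by omega), pow_zero]
  have hmiddle : ∑ k ∈ Ico (j + 1) (m - j), ζ ^ k = -(1 + U + conj U) := by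
    have hgeom := hζ.geom_sum_eq_zero hm
    rw [range_eq_Ico, ← sum_Ico_consecutive _ (by omega : 0 ≤ j + 1) (by omega : j + 1 ≤ m),
      ← sum_Ico_consecutive _ (by omega : j + 1 ≤ m - j) (by omega : m - j ≤ m), hhead,
      houter] at hgeom
    linear_combination hgeom
  have hblock (a b : ℕ) (c : ℝ) (hc : ∀ k ∈ Ico a b, δ k = c) :
      ∑ k ∈ Ico a b, (δ k : ℂ) * ζ ^ k = c * ∑ k ∈ Ico a b, ζ ^ k := by
    rw [mul_sum]
    exact sum_congr rfl fun k hk ↦ by rw [hc k hk]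
  rw [range_eq_Ico, ← sum_Ico_consecutive _ (by omega : 0 ≤ j + 1) (by omega : j + 1 ≤ m + 1),
    ← sum_Ico_consecutive _ (by omega : j + 1 ≤ m - j) (by omega : m - j ≤ m + 1),
    hblock 0 (j + 1) 1 fun k hk ↦ h₁ k (by simp at hk; omega),
    hblock (j + 1) (m - j) (-1) fun k hk ↦ h₂ k (by simp at hk; omega) (by simp at hk; omega),
    hblock (m - j) (m + 1) 1 fun k hk ↦ h₃ k (by simp at hk; omega) (by simp at hk; omega),
    sum_Ico_succ_top (by omega : m - j ≤ m), hζ.pow_eq_one, houter, hhead, hmiddle]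
  have hre : U + conj U = 2 * U.re := by exact_mod_cast add_conj U
  push_cast
  linear_combination 2 * hre

end SignPattern

theorem p_succ_m_real_and_between_three_and_m_add_one_general
    (m : ℕ) (hm : 2 ≤ m)
    (δ : ℕ → ℝ)
    (hδ1 : ∀ k, k ≤ m / 4 → δ k = 1)
    (hδ2 : ∀ k, m / 4 + 1 ≤ k → k ≤ m - m / 4 - 1 → δ k = -1)
    (hδ3 : ∀ k, m - m / 4 ≤ k → k ≤ m → δ k = 1)
    (p : ℕ → ℂ)
    (hp : ∀ n, p n = ∑ k ∈ Finset.range n,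
      (δ k : ℂ) * Complex.exp (2 * Real.pi * Complex.I * k / m)) :
    (p (m + 1)).im = 0 ∧ 3 ≤ (p (m + 1)).re ∧ (p (m + 1)).re ≤ m + 1 := by
  have hζ := isPrimitiveRoot_exp m (by omega)
  simp only [hp, exp_two_pi_mul_I_mul_div]
  have hnorm : ‖∑ k ∈ range (m + 1), (δ k : ℂ) * exp (2 * π * I / m) ^ k‖ ≤ m + 1 := by
    calc _ ≤ ∑ k ∈ range (m + 1), (1 : ℝ) := norm_sum_le_of_le _ fun k hk ↦ by
            rw [norm_mul, norm_pow, hζ.norm'_eq_one (by omega), one_pow, mul_one, norm_real,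
              Real.norm_eq_abs,
              SignPattern.abs_eq_one_of_le hδ1 hδ2 hδ3 (by simpa [Nat.lt_succ_iff] using hk)]
      _ = m + 1 := by simp
  have hU : 0 ≤ (∑ k ∈ Ico 1 (m / 4 + 1), exp (2 * π * I / m) ^ k).re := by
    rw [re_sum]
    exact sum_nonneg fun k hk ↦ re_exp_two_pi_mul_I_div_pow_nonneg (by simp at hk; omega)
  rw [SignPattern.sum_mul_pow_eq_three_add_four_mul_re hδ1 hδ2 hδ3 hζ hm (by omega)]
    at hnorm ⊢
  rw [norm_real, Real.norm_eq_abs] at hnorm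
  exact ⟨ofReal_im _, by rw [ofReal_re]; linarith, (le_abs_self _).trans hnorm⟩

/-- For the sign pattern `δ_k = +1` for `0 ≤ k ≤ ⌊m/4⌋`, `δ_k = −1` for
`⌊m/4⌋+1 ≤ k ≤ m−⌊m/4⌋−1`, `δ_k = +1` for `m−⌊m/4⌋ ≤ k ≤ m`, the number
`p(m+1) = Σ_{k=0}^m δ_k e^{2kπi/m}` is real and `3 ≤ p(m+1) ≤ m+1`. -/
theorem p_succ_m_real_and_between_three_and_m_add_one
    (m : ℕ) (hm : 2 ≤ m)
    (δ : ℕ → ℝ)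
    (hδ1 : ∀ k, k ≤ m / 4 → δ k = 1)
    (hδ2 : ∀ k, m / 4 + 1 ≤ k → k ≤ m - m / 4 - 1 → δ k = -1)
    (hδ3 : ∀ k, m - m / 4 ≤ k → k ≤ m → δ k = 1)
    (hδpm : ∀ n, δ n = 1 ∨ δ n = -1)
    (hδrec : ∀ q k, k ≤ m → δ ((m + 1) * q + k) = δ q * δ k)
    (p : ℕ → ℂ)
    (hp : ∀ n, p n = ∑ k ∈ Finset.range n,
      (δ k : ℂ) * Complex.exp (2 * Real.pi * Complex.I * k / m)) :
    (p (m + 1)).im = 0 ∧ 3 ≤ (p (m + 1)).re ∧ (p (m + 1)).re ≤ m + 1 :=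
  p_succ_m_real_and_between_three_and_m_add_one_general m hm δ hδ1 hδ2 hδ3 p hp
end

section
/- Let m ≥ 1 be an integer, δ_1,…,δ_m ∈ {+1,−1}, and let δ be the (+1,δ_1,…,δ_m)-Thue–Morse sequence. Then for every j ∈ {1,2,…,m} and every n ∈ ℕ, p(j·(m+1)^n) = (p(m+1))^n · p(j). -/
/-!
The weight `k ↦ δ_k e^{2πik/m}` satisfies the same block recursion as `δ`, because
`e^{2πi((m+1)q+k)/m} = e^{2πiq} e^{2πiq/m} e^{2πik/m} = e^{2πiq/m} e^{2πik/m}`.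
For any such weight `f`, the first `(m+1)N` terms split into `N` blocks of length `m+1`, the
`q`-th of which sums to `f q · p(m+1)`; hence `p((m+1)N) = p(m+1) p(N)`, and iterating gives the
theorem.
-/

open Complex
open scoped Real

namespace Finset

variable {R : Type*} [CommSemiring R] {m : ℕ} {f : ℕ → R}

theorem sum_range_succ_mul_of_block_mul
    (hf : ∀ q k, k ≤ m → f ((m + 1) * q + k) = f q * f k) (N : ℕ) :
    ∑ k ∈ range ((m + 1) * N), f k = (∑ k ∈ range (m + 1), f k) * ∑ k ∈ range N, f k := by
  induction N with
  | zero => simp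
  | succ N ih =>
    have hblock : ∑ k ∈ range (m + 1), f ((m + 1) * N + k) = f N * ∑ k ∈ range (m + 1), f k := by
      rw [mul_sum]
      exact sum_congr rfl fun k hk => hf N k (Nat.lt_succ_iff.mp (mem_range.mp hk))
    rw [mul_add_one, sum_range_add, ih, hblock, sum_range_succ _ N]
    ring

theorem sum_range_mul_succ_pow_of_block_mul
    (hf : ∀ q k, k ≤ m → f ((m + 1) * q + k) = f q * f k) (j n : ℕ) :
    ∑ k ∈ range (j * (m + 1) ^ n), f k
      = (∑ k ∈ range (m + 1), f k) ^ n * ∑ k ∈ range j, f k := by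
  induction n with
  | zero => simp
  | succ n ih =>
    rw [pow_succ', mul_left_comm, sum_range_succ_mul_of_block_mul hf, ih]
    ring

end Finset

theorem Complex.exp_two_pi_I_mul_block_div (m q k : ℕ) :
    exp (2 * π * I * ((m + 1) * q + k : ℕ) / m)
      = exp (2 * π * I * q / m) * exp (2 * π * I * k / m) := by
  rcases Nat.eq_zero_or_pos m with rfl | hm
  · simp
  have hmC : (m : ℂ) ≠ 0 := Nat.cast_ne_zero.mpr hm.ne'
  have harg : 2 * π * I * ((m + 1) * q + k : ℕ) / m
      = (q : ℤ) * (2 * π * I) + (2 * π * I * q / m + 2 * π * I * k / m) := by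
    push_cast
    field_simp
    ring
  rw [harg, exp_add, exp_add, exp_int_mul_two_pi_mul_I, one_mul]

theorem p_self_similarity_general
    (m : ℕ)
    (δ : ℕ → ℝ)
    (hδrec : ∀ q k, k ≤ m → δ ((m + 1) * q + k) = δ q * δ k)
    (p : ℕ → ℂ)
    (hp : ∀ n, p n = ∑ k ∈ Finset.range n,
      (δ k : ℂ) * Complex.exp (2 * Real.pi * Complex.I * k / m)) :
    ∀ j, 1 ≤ j → j ≤ m → ∀ n : ℕ, p (j * (m + 1) ^ n) = (p (m + 1)) ^ n * p j := by
  intro j _ _ n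
  have hweight : ∀ q k, k ≤ m →
      (δ ((m + 1) * q + k) : ℂ) * exp (2 * π * I * ((m + 1) * q + k : ℕ) / m)
        = (δ q * exp (2 * π * I * q / m)) * (δ k * exp (2 * π * I * k / m)) := by
    intro q k hk
    rw [hδrec q k hk, exp_two_pi_I_mul_block_div]
    push_cast
    ring
  simp only [hp]
  exact Finset.sum_range_mul_succ_pow_of_block_mul hweight j n

/-- For the `(+1,δ_1,…,δ_m)`-Thue–Morse sequence, for every `1 ≤ j ≤ m` and
every `n ∈ ℕ`, one has `p(j·(m+1)^n) = (p(m+1))^n · p(j)`. -/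
theorem p_self_similarity
    (m : ℕ) (hm : 1 ≤ m)
    (δ : ℕ → ℝ) (hδ0 : δ 0 = 1)
    (hδpm : ∀ n, δ n = 1 ∨ δ n = -1)
    (hδrec : ∀ q k, k ≤ m → δ ((m + 1) * q + k) = δ q * δ k)
    (p : ℕ → ℂ)
    (hp : ∀ n, p n = ∑ k ∈ Finset.range n,
      (δ k : ℂ) * Complex.exp (2 * Real.pi * Complex.I * k / m)) :
    ∀ j, 1 ≤ j → j ≤ m → ∀ n : ℕ, p (j * (m + 1) ^ n) = (p (m + 1)) ^ n * p j :=
  p_self_similarity_general m δ hδrec p hp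
end

section
/- Let m ≥ 1 be an integer, δ_1,…,δ_m ∈ {+1,−1}, and let δ be the (+1,δ_1,…,δ_m)-Thue–Morse sequence. Then for every n ∈ ℕ, the polygonal sets satisfy the recurrence P(n+1) = ⋃_{j=0}^m ( p(j·(m+1)^n) + δ_j e^{2jπi/m} · P(n) ), where c + A = {c + a : a ∈ A} and cA = {ca : a ∈ A} for c ∈ ℂ, A ⊆ ℂ. -/
open Complex Set
open scoped Real Pointwise

/-!
Write `ζ = exp (2πi/m)` and `s k = δ k ζ^k`, so that `p` is the sequence of partial sums of `s`.
Since `ζ^m = 1` we have `ζ^(m+1) = ζ`, hence `s` obeys the same digit recursion as `δ`, and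
iterating it gives `s (j (m+1)^n + r) = s j · s r` for `r < (m+1)^n`. Consequently the `j`-th
block of `(m+1)^n` consecutive points of `p` is the image of the first block under
`z ↦ p (j (m+1)^n) + s j · z`, and this affine map carries segments to segments.
-/

theorem apply_pow_mul_add_eq_mul {M : Type*} [Monoid M] {b : ℕ} {f : ℕ → M} (h0 : f 0 = 1)
    (hrec : ∀ q k, k < b → f (b * q + k) = f q * f k) :
    ∀ n q r, r < b ^ n → f (b ^ n * q + r) = f q * f r := by
  intro n
  induction n with
  | zero =>
    intro q r hr
    obtain rfl : r = 0 := by simpa using hr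
    simp [h0]
  | succ n ih =>
    intro q r hr
    have hb : 0 < b := Nat.pos_of_ne_zero (by rintro rfl; simp at hr)
    have hdiv : r / b < b ^ n := by
      rw [Nat.div_lt_iff_lt_mul hb, ← pow_succ]; exact hr
    have hmod : r % b < b := Nat.mod_lt r hb
    have hsplit : b ^ (n + 1) * q + r = b * (b ^ n * q + r / b) + r % b := by
      rw [pow_succ', mul_add, mul_assoc, add_assoc, Nat.div_add_mod]
    rw [hsplit, hrec _ _ hmod, ih _ _ hdiv, mul_assoc, ← hrec _ _ hmod, Nat.div_add_mod]

theorem pow_succ_mul_add_eq_of_pow_eq_one {M : Type*} [CommMonoid M] {ζ : M} {m : ℕ}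
    (hζ : ζ ^ m = 1) (q k : ℕ) : ζ ^ ((m + 1) * q + k) = ζ ^ q * ζ ^ k := by
  rw [pow_add, add_mul, pow_add, pow_mul, hζ, one_pow, one_mul, one_mul]

theorem sum_range_add_of_shift {R : Type*} [Semiring R] {s : ℕ → R} {c N : ℕ} {w : R}
    (hs : ∀ r < N, s (c + r) = w * s r) {k : ℕ} (hk : k ≤ N) :
    ∑ i ∈ Finset.range (c + k), s i = ∑ i ∈ Finset.range c, s i + w * ∑ i ∈ Finset.range k, s i := by
  rw [Finset.sum_range_add, Finset.mul_sum]
  exact congrArg _ (Finset.sum_congr rfl fun r hr => hs r (by simp at hr; omega))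

theorem iUnion_Icc_mul {α : Type*} (f : ℕ → Set α) (b N : ℕ) :
    ⋃ k ∈ Finset.Icc 1 (b * N), f k = ⋃ j ∈ Finset.range b, ⋃ k ∈ Finset.Icc 1 N, f (j * N + k) := by
  ext z
  simp only [mem_iUnion, Finset.mem_Icc, Finset.mem_range, exists_prop]
  constructor
  · rintro ⟨k, ⟨hk1, hk2⟩, hz⟩
    have hN : 0 < N := Nat.pos_of_ne_zero (by rintro rfl; simp at hk2; omega)
    refine ⟨(k - 1) / N, ?_, (k - 1) % N + 1, ⟨by omega, Nat.mod_lt _ hN⟩, ?_⟩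
    · rw [Nat.div_lt_iff_lt_mul hN]; omega
    · rwa [← add_assoc, mul_comm, Nat.div_add_mod, Nat.sub_add_cancel hk1]
  · rintro ⟨j, hj, k, ⟨hk1, hk2⟩, hz⟩
    refine ⟨j * N + k, ⟨by omega, ?_⟩, hz⟩
    calc j * N + k ≤ j * N + N := by omega
      _ = (j + 1) * N := by ring
      _ ≤ b * N := Nat.mul_le_mul_right N hj

theorem image_segment_add_mul {A : Type*} [Ring A] [Algebra ℝ A] (c w a b : A) :
    (fun z => c + w * z) '' segment ℝ a b = segment ℝ (c + w * a) (c + w * b) := by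
  rw [show (fun z => c + w * z) = (fun z => c + z) ∘ LinearMap.mulLeft ℝ w from rfl, image_comp,
    ← segment_translate_image]
  congr 1
  exact image_segment ℝ (LinearMap.mulLeft ℝ w).toAffineMap a b

theorem polygonal_paths_recurrence_general
    (m : ℕ) (hm : 1 ≤ m)
    (δ : ℕ → ℝ) (hδ0 : δ 0 = 1)
    (hδrec : ∀ q k, k ≤ m → δ ((m + 1) * q + k) = δ q * δ k)
    (p : ℕ → ℂ)
    (hp : ∀ n, p n = ∑ k ∈ Finset.range n,
      (δ k : ℂ) * Complex.exp (2 * Real.pi * Complex.I * k / m))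
    (P : ℕ → Set ℂ)
    (hP : ∀ n, P n = ⋃ k ∈ Finset.Icc 1 ((m + 1) ^ n), segment ℝ (p (k - 1)) (p k)) :
    ∀ n : ℕ, P (n + 1) = ⋃ j ∈ Finset.range (m + 1),
      (fun z => p (j * (m + 1) ^ n) +
        (δ j : ℂ) * Complex.exp (2 * Real.pi * Complex.I * j / m) * z) '' P n := by
  intro n
  set ζ := Complex.exp (2 * π * I / m)
  have hζ : ζ ^ m = 1 := (isPrimitiveRoot_exp m (by omega)).pow_eq_one
  have hexp (k : ℕ) : Complex.exp (2 * π * I * k / m) = ζ ^ k := by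
    rw [← Complex.exp_nat_mul]; ring_nf
  set s : ℕ → ℂ := fun k => δ k * ζ ^ k
  have hs_rec (q k : ℕ) (hk : k < m + 1) : s ((m + 1) * q + k) = s q * s k := by
    simp only [s, hδrec q k (by omega), pow_succ_mul_add_eq_of_pow_eq_one hζ]
    push_cast; ring
  have hp_shift (j k : ℕ) (hk : k ≤ (m + 1) ^ n) :
      p (j * (m + 1) ^ n + k) = p (j * (m + 1) ^ n) + s j * p k := by
    simp only [hp, hexp]
    refine sum_range_add_of_shift (fun r hr => ?_) hk
    rw [mul_comm j]
    exact apply_pow_mul_add_eq_mul (f := s) (by simp [s, hδ0]) hs_rec n j r hr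
  rw [hP, hP, pow_succ', iUnion_Icc_mul]
  refine iUnion₂_congr fun j _ => ?_
  rw [image_iUnion₂]
  refine iUnion₂_congr fun k hk => ?_
  obtain ⟨hk1, hk⟩ := Finset.mem_Icc.mp hk
  rw [hexp, image_segment_add_mul, ← hp_shift j k hk, ← hp_shift j (k - 1) (by omega)]
  congr 2
  omega

/-- The polygonal sets satisfy the recurrence
`P(n+1) = ⋃_{j=0}^m ( p(j·(m+1)^n) + δ_j e^{2jπi/m} · P(n) )`. -/
theorem polygonal_paths_recurrence
    (m : ℕ) (hm : 1 ≤ m)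
    (δ : ℕ → ℝ) (hδ0 : δ 0 = 1)
    (hδpm : ∀ n, δ n = 1 ∨ δ n = -1)
    (hδrec : ∀ q k, k ≤ m → δ ((m + 1) * q + k) = δ q * δ k)
    (p : ℕ → ℂ)
    (hp : ∀ n, p n = ∑ k ∈ Finset.range n,
      (δ k : ℂ) * Complex.exp (2 * Real.pi * Complex.I * k / m))
    (P : ℕ → Set ℂ)
    (hP : ∀ n, P n = ⋃ k ∈ Finset.Icc 1 ((m + 1) ^ n), segment ℝ (p (k - 1)) (p k)) :
    ∀ n : ℕ, P (n + 1) = ⋃ j ∈ Finset.range (m + 1),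
      (fun z => p (j * (m + 1) ^ n) +
        (δ j : ℂ) * Complex.exp (2 * Real.pi * Complex.I * j / m) * z) '' P n :=
  polygonal_paths_recurrence_general m hm δ hδ0 hδrec p hp P hP
end

section
/- Let m ≥ 1 be an integer, δ_1,…,δ_m ∈ {+1,−1}, and let δ be the (+1,δ_1,…,δ_m)-Thue–Morse sequence with p(m+1) ≠ 0. Define Q_n = (p(m+1))^{−n}·P(n) for n ∈ ℕ. Then for every n ∈ ℕ, Q_{n+1} = ⋃_{j=0}^m S_j(Q_n), where S_j(z) = (p(j) + δ_j e^{2jπi/m} z)/p(m+1). -/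
open Complex Set
open scoped Real Pointwise

/-!
Write `a k = δ_k ω^k` with `ω = e^{2πi/m}`, so that `p` is the sequence of partial sums of `a`.
Since `ω^m = 1`, the Thue–Morse recursion makes `a` block multiplicative in base `m + 1`,
`a((m+1)q + r) = a(q) a(r)` for `r ≤ m`, and then in every base `(m+1)^n`. Summing block by block
gives `p((m+1)^n j + t) = p(j) p(m+1)^n + a(j) p(t)` for `t ≤ (m+1)^n`, which says that the real
affine map `S_j` sends the `t`-th edge of `Q_n` onto the `((m+1)^n j + t)`-th edge of `Q_{n+1}`.
-/

section BlockMultiplicative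

open Finset

variable {R : Type*} [CommSemiring R] {a : ℕ → R} {b : ℕ}

theorem sum_range_mul_add_of_block_mul (ha : ∀ q r, r < b → a (b * q + r) = a q * a r)
    (q : ℕ) {t : ℕ} (ht : t ≤ b) :
    ∑ k ∈ range (b * q + t), a k
      = (∑ k ∈ range q, a k) * (∑ k ∈ range b, a k) + a q * ∑ k ∈ range t, a k := by
  have block : ∀ q t, t ≤ b → ∑ s ∈ range t, a (b * q + s) = a q * ∑ s ∈ range t, a s :=
    fun q t ht => by
      rw [mul_sum]
      exact sum_congr rfl fun s hs => ha q s (by have := mem_range.1 hs; omega)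
  have full : ∀ q, ∑ k ∈ range (b * q), a k = (∑ k ∈ range q, a k) * ∑ k ∈ range b, a k := by
    intro q
    induction q with
    | zero => simp
    | succ q ih =>
      rw [Nat.mul_succ, sum_range_add, ih, block q b le_rfl, sum_range_succ]
      ring
  rw [sum_range_add, full, block q t ht]

theorem block_mul_pow (h0 : a 0 = 1) (ha : ∀ q r, r < b → a (b * q + r) = a q * a r) (n : ℕ) :
    ∀ q r, r < b ^ n → a (b ^ n * q + r) = a q * a r := by
  induction n with
  | zero =>
    intro q r hr
    obtain rfl : r = 0 := by simpa using hr
    simp [h0]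
  | succ n ih =>
    intro q r hr
    have hb : 0 < b := Nat.pos_of_ne_zero (by rintro rfl; simp at hr)
    obtain ⟨r', s, hs, rfl⟩ : ∃ r' s, s < b ∧ r = b * r' + s :=
      ⟨r / b, r % b, Nat.mod_lt r hb, (Nat.div_add_mod r b).symm⟩
    have hr' : r' < b ^ n := by
      rw [pow_succ'] at hr
      exact Nat.lt_of_mul_lt_mul_left (by omega : b * r' < b * b ^ n)
    calc a (b ^ (n + 1) * q + (b * r' + s)) = a (b * (b ^ n * q + r') + s) := by
          congr 1; ring
      _ = a q * (a r' * a s) := by rw [ha _ s hs, ih q r' hr', mul_assoc]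
      _ = a q * a (b * r' + s) := by rw [ha r' s hs]

theorem sum_range_pow_eq_pow (h0 : a 0 = 1) (ha : ∀ q r, r < b → a (b * q + r) = a q * a r)
    (n : ℕ) : ∑ k ∈ range (b ^ n), a k = (∑ k ∈ range b, a k) ^ n := by
  induction n with
  | zero => simp [h0]
  | succ n ih =>
    have := sum_range_mul_add_of_block_mul (block_mul_pow h0 ha n) b (Nat.zero_le _)
    rw [add_zero, sum_range_zero, mul_zero, add_zero, ih] at this
    rw [pow_succ, this, pow_succ']

theorem sum_range_pow_mul_add (h0 : a 0 = 1) (ha : ∀ q r, r < b → a (b * q + r) = a q * a r)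
    (n q : ℕ) {t : ℕ} (ht : t ≤ b ^ n) :
    ∑ k ∈ range (b ^ n * q + t), a k
      = (∑ k ∈ range q, a k) * (∑ k ∈ range b, a k) ^ n + a q * ∑ k ∈ range t, a k := by
  rw [sum_range_mul_add_of_block_mul (block_mul_pow h0 ha n) q ht, sum_range_pow_eq_pow h0 ha n]

end BlockMultiplicative

theorem exp_two_pi_I_div_pow_self (m : ℕ) : exp (2 * π * I / m) ^ m = 1 := by
  rcases eq_or_ne m 0 with rfl | hm
  · exact pow_zero _
  · exact (isPrimitiveRoot_exp m hm).pow_eq_one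

noncomputable def pathStep (m : ℕ) (δ : ℕ → ℝ) (k : ℕ) : ℂ :=
  δ k * exp (2 * π * I * k / m)

theorem pathStep_eq (m : ℕ) (δ : ℕ → ℝ) (k : ℕ) :
    pathStep m δ k = δ k * exp (2 * π * I / m) ^ k := by
  rw [pathStep, ← exp_nat_mul]
  ring_nf

theorem pathStep_mul {m : ℕ} {δ : ℕ → ℝ}
    (hδrec : ∀ q k, k ≤ m → δ ((m + 1) * q + k) = δ q * δ k) (q r : ℕ) (hr : r < m + 1) :
    pathStep m δ ((m + 1) * q + r) = pathStep m δ q * pathStep m δ r := by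
  simp only [pathStep_eq, hδrec q r (Nat.lt_succ_iff.1 hr), pow_add, pow_mul, pow_succ,
    exp_two_pi_I_div_pow_self, one_mul]
  push_cast
  ring

theorem image_segment_of_eq_add_mul {A : Type*} [Ring A] [Algebra ℝ A] {f : A → A} {u v : A}
    (hf : ∀ z, f z = u + v * z) (x y : A) : f '' segment ℝ x y = segment ℝ (f x) (f y) := by
  let g : A →ᵃ[ℝ] A := (LinearMap.mulLeft ℝ v).toAffineMap + AffineMap.const ℝ A u
  have hfg : f = g := funext fun z => by simp [g, hf, add_comm]
  rw [hfg, image_segment]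

theorem smul_segment_eq {A : Type*} [Ring A] [Algebra ℝ A] (e x y : A) :
    e • segment ℝ x y = segment ℝ (e * x) (e * y) := by
  rw [← image_smul, image_segment_of_eq_add_mul (u := 0) (v := e) fun z => by simp]
  simp

theorem iUnion_Icc_one_eq_iUnion_range {α : Type*} (N : ℕ) (A : ℕ → Set α) :
    ⋃ k ∈ Finset.Icc 1 N, A k = ⋃ k ∈ Finset.range N, A (k + 1) := by
  ext x
  simp only [mem_iUnion, Finset.mem_Icc, Finset.mem_range, exists_prop]
  constructor
  · rintro ⟨k, ⟨hk1, hkN⟩, hx⟩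
    exact ⟨k - 1, by omega, by rwa [Nat.sub_add_cancel hk1]⟩
  · rintro ⟨k, hk, hx⟩
    exact ⟨k + 1, ⟨by omega, hk⟩, hx⟩

theorem iUnion_range_mul {α : Type*} (B b : ℕ) (A : ℕ → Set α) :
    ⋃ k ∈ Finset.range (B * b), A k
      = ⋃ j ∈ Finset.range b, ⋃ t ∈ Finset.range B, A (B * j + t) := by
  ext x
  simp only [mem_iUnion, Finset.mem_range, exists_prop]
  constructor
  · rintro ⟨k, hk, hx⟩
    have hB : 0 < B := Nat.pos_of_mul_pos_right (by omega : 0 < B * b)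
    exact ⟨k / B, Nat.div_lt_of_lt_mul hk, k % B, Nat.mod_lt k hB, by rwa [Nat.div_add_mod]⟩
  · rintro ⟨j, hj, t, ht, hx⟩
    refine ⟨B * j + t, ?_, hx⟩
    calc B * j + t < B * (j + 1) := by rw [Nat.mul_succ]; omega
      _ ≤ B * b := Nat.mul_le_mul_left B hj

theorem rescaled_polygonal_paths_recurrence_general
    (m : ℕ)
    (δ : ℕ → ℝ) (hδ0 : δ 0 = 1)
    (hδrec : ∀ q k, k ≤ m → δ ((m + 1) * q + k) = δ q * δ k)
    (p : ℕ → ℂ)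
    (hp : ∀ n, p n = ∑ k ∈ Finset.range n,
      (δ k : ℂ) * Complex.exp (2 * Real.pi * Complex.I * k / m))
    (P : ℕ → Set ℂ)
    (hP : ∀ n, P n = ⋃ k ∈ Finset.Icc 1 ((m + 1) ^ n), segment ℝ (p (k - 1)) (p k))
    (S : ℕ → ℂ → ℂ)
    (hS : ∀ j z, S j z = (p j + (δ j : ℂ) * Complex.exp (2 * Real.pi * Complex.I * j / m) * z)
      / p (m + 1))
    (Q : ℕ → Set ℂ)
    (hQ : ∀ n, Q n = ((p (m + 1)) ^ n)⁻¹ • P n) :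
    ∀ n : ℕ, Q (n + 1) = ⋃ j ∈ Finset.range (m + 1), S j '' Q n := by
  intro n
  set c := p (m + 1)
  have hp_pow_mul_add : ∀ j t, t ≤ (m + 1) ^ n →
      p ((m + 1) ^ n * j + t) = p j * c ^ n + pathStep m δ j * p t := fun j t ht => by
    simp only [c, hp]
    exact sum_range_pow_mul_add (by simp [pathStep, hδ0]) (pathStep_mul hδrec) n j ht
  have hS_endpoint : ∀ j t, t ≤ (m + 1) ^ n →
      S j ((c ^ n)⁻¹ * p t) = (c ^ (n + 1))⁻¹ * p ((m + 1) ^ n * j + t) := fun j t ht => by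
    rw [hS, hp_pow_mul_add j t ht]
    -- if `c = 0`, both sides are `0` because `x / 0 = 0` and `0⁻¹ = 0`
    rcases eq_or_ne c 0 with hc | hc
    · simp [hc]
    · field_simp
      simp only [pathStep]
      ring
  have hS_segment : ∀ j t, t < (m + 1) ^ n →
      S j '' ((c ^ n)⁻¹ • segment ℝ (p t) (p (t + 1)))
        = (c ^ (n + 1))⁻¹ • segment ℝ (p ((m + 1) ^ n * j + t)) (p ((m + 1) ^ n * j + t + 1)) :=
    fun j t ht => by
      rw [smul_segment_eq, smul_segment_eq, image_segment_of_eq_add_mul (u := p j / c)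
          (v := pathStep m δ j / c) fun z => by rw [hS]; simp only [pathStep]; ring,
        hS_endpoint j t ht.le, hS_endpoint j (t + 1) ht, add_assoc]
  rw [hQ, hQ, hP, hP, iUnion_Icc_one_eq_iUnion_range, iUnion_Icc_one_eq_iUnion_range,
    pow_succ (m + 1), iUnion_range_mul]
  simp only [Nat.add_sub_cancel, smul_set_iUnion₂, image_iUnion₂]
  exact iUnion₂_congr fun j _ => iUnion₂_congr fun t ht =>
    (hS_segment j t (Finset.mem_range.1 ht)).symm

/-- With `Q_n = (p(m+1))^{-n} • P(n)` and
`S_j(z) = (p(j) + δ_j e^{2jπi/m} z)/p(m+1)`, one has `Q_{n+1} = ⋃_{j=0}^m S_j(Q_n)`. -/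
theorem rescaled_polygonal_paths_recurrence
    (m : ℕ) (hm : 1 ≤ m)
    (δ : ℕ → ℝ) (hδ0 : δ 0 = 1)
    (hδpm : ∀ n, δ n = 1 ∨ δ n = -1)
    (hδrec : ∀ q k, k ≤ m → δ ((m + 1) * q + k) = δ q * δ k)
    (p : ℕ → ℂ)
    (hp : ∀ n, p n = ∑ k ∈ Finset.range n,
      (δ k : ℂ) * Complex.exp (2 * Real.pi * Complex.I * k / m))
    (hpne : p (m + 1) ≠ 0)
    (P : ℕ → Set ℂ)
    (hP : ∀ n, P n = ⋃ k ∈ Finset.Icc 1 ((m + 1) ^ n), segment ℝ (p (k - 1)) (p k))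
    (S : ℕ → ℂ → ℂ)
    (hS : ∀ j z, S j z = (p j + (δ j : ℂ) * Complex.exp (2 * Real.pi * Complex.I * j / m) * z)
      / p (m + 1))
    (Q : ℕ → Set ℂ)
    (hQ : ∀ n, Q n = ((p (m + 1)) ^ n)⁻¹ • P n) :
    ∀ n : ℕ, Q (n + 1) = ⋃ j ∈ Finset.range (m + 1), S j '' Q n :=
  rescaled_polygonal_paths_recurrence_general m δ hδ0 hδrec p hp P hP S hS Q hQ
end

section
/- Let m ≥ 2 be an integer and let δ_0,…,δ_m ∈ {+1,−1} be given by δ_k = +1 for 0 ≤ k ≤ ⌊m/4⌋, δ_k = −1 for ⌊m/4⌋+1 ≤ k ≤ m−⌊m/4⌋−1, and δ_k = +1 for m−⌊m/4⌋ ≤ k ≤ m. Then 3 ≤ Σ_{k=0}^m δ_k · cos(2kπ/m) ≤ m+1. -/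
/-!
The signs δ_k are chosen so that δ_k has the sign of cos(2kπ/m) (the argument lies in
[0, π/2], [π/2, 3π/2] or [3π/2, 2π] on the three blocks), so the sum is
Σ_{k=0}^m |cos(2kπ/m)|.
That is at most m + 1, and at least 3: the endpoints k = 0, m contribute 1 each, and the middle
contributes |cos π| = 1 when m is even, 2 cos(π/m) ≥ 1 when m is odd.
-/

open Real Finset

lemma cos_two_pi_mul_nonneg {t : ℝ} (h₁ : -(1 / 4) ≤ t) (h₂ : t ≤ 1 / 4) :
    0 ≤ cos (2 * π * t) :=
  cos_nonneg_of_mem_Icc ⟨by nlinarith [pi_pos], by nlinarith [pi_pos]⟩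

lemma cos_two_pi_mul_nonpos {t : ℝ} (h₁ : 1 / 4 ≤ t) (h₂ : t ≤ 3 / 4) :
    cos (2 * π * t) ≤ 0 :=
  cos_nonpos_of_pi_div_two_le_of_le (by nlinarith [pi_pos]) (by nlinarith [pi_pos])

lemma cos_two_pi_mul_nonneg_of_three_quarters_le {t : ℝ} (h₁ : 3 / 4 ≤ t)
    (h₂ : t ≤ 5 / 4) : 0 ≤ cos (2 * π * t) := by
  simpa [mul_sub, cos_sub_two_pi] using
    cos_two_pi_mul_nonneg (t := t - 1) (by linarith) (by linarith)

theorem delta_mul_cos_eq_abs_cos {m : ℕ} (hm : 0 < m) {δ : ℕ → ℝ}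
    (hδ1 : ∀ k, k ≤ m / 4 → δ k = 1)
    (hδ2 : ∀ k, m / 4 + 1 ≤ k → k ≤ m - m / 4 - 1 → δ k = -1)
    (hδ3 : ∀ k, m - m / 4 ≤ k → k ≤ m → δ k = 1) {k : ℕ} (hk : k ≤ m) :
    δ k * cos (2 * k * π / m) = |cos (2 * k * π / m)| := by
  have hmR : (0 : ℝ) < m := by exact_mod_cast hm
  rw [show 2 * (k : ℝ) * π / m = 2 * π * (k / m) by ring]
  rcases le_or_gt k (m / 4) with h₁ | h₁
  · have hk4 : (4 * k : ℝ) ≤ m := by exact_mod_cast (by omega : 4 * k ≤ m)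
    rw [hδ1 k h₁, one_mul, abs_of_nonneg (cos_two_pi_mul_nonneg _ _)]
    · exact le_trans (by norm_num) (div_nonneg k.cast_nonneg hmR.le)
    · rw [div_le_iff₀ hmR]; linarith
  rcases le_or_gt k (m - m / 4 - 1) with h₂ | h₂
  · have hk4 : (m : ℝ) ≤ 4 * k := by exact_mod_cast (by omega : m ≤ 4 * k)
    have hk4' : (4 * k : ℝ) ≤ 3 * m := by exact_mod_cast (by omega : 4 * k ≤ 3 * m)
    rw [hδ2 k (by omega) h₂, neg_one_mul, abs_of_nonpos (cos_two_pi_mul_nonpos _ _)]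
    · rw [le_div_iff₀ hmR]; linarith
    · rw [div_le_iff₀ hmR]; linarith
  · have hk4 : (3 * m : ℝ) ≤ 4 * k := by exact_mod_cast (by omega : 3 * m ≤ 4 * k)
    have hkm : (k : ℝ) ≤ m := by exact_mod_cast hk
    rw [hδ3 k (by omega) hk, one_mul,
      abs_of_nonneg (cos_two_pi_mul_nonneg_of_three_quarters_le _ _)]
    · rw [le_div_iff₀ hmR]; linarith
    · rw [div_le_iff₀ hmR]; linarith

lemma one_le_two_mul_cos_pi_div {m : ℕ} (hm : 3 ≤ m) : 1 ≤ 2 * cos (π / m) := by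
  have h := cos_le_cos_of_nonneg_of_le_pi (div_nonneg pi_pos.le (Nat.cast_nonneg m))
    (by linarith [pi_pos]) (div_le_div_of_nonneg_left pi_pos.le (by norm_num)
      (by exact_mod_cast hm : (3 : ℝ) ≤ m))
  rw [cos_pi_div_three] at h
  linarith

lemma abs_cos_two_mul_pi_div_self {m : ℕ} (hm : m ≠ 0) : |cos (2 * m * π / m)| = 1 := by
  rw [mul_right_comm, mul_div_cancel_right₀ _ (by exact_mod_cast hm), cos_two_pi, abs_one]

theorem three_le_sum_abs_cos {m : ℕ} (hm : 2 ≤ m) :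
    3 ≤ ∑ k ∈ range (m + 1), |cos (2 * k * π / m)| := by
  set f : ℕ → ℝ := fun k => |cos (2 * k * π / m)|
  have hf0 : f 0 = 1 := by simp [f]
  have hfm : f m = 1 := abs_cos_two_mul_pi_div_self (by omega)
  have sum_le {s : Finset ℕ} (hs : ∀ k ∈ s, k ≤ m) :
      ∑ k ∈ s, f k ≤ ∑ k ∈ range (m + 1), f k :=
    sum_le_sum_of_subset_of_nonneg (fun k hk => mem_range.2 (Nat.lt_succ_of_le (hs k hk)))
      fun _ _ _ => abs_nonneg _
  obtain ⟨j, rfl | rfl⟩ := Nat.even_or_odd' m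
  · have hfj : f j = 1 := by
      have hj : (j : ℝ) ≠ 0 := by exact_mod_cast (by omega : j ≠ 0)
      simp only [f]
      rw [show 2 * (j : ℝ) * π / ((2 * j : ℕ) : ℝ) = π by push_cast; field_simp,
        cos_pi, abs_neg, abs_one]
    calc (3 : ℝ) = ∑ k ∈ {0, j, 2 * j}, f k := by
          rw [sum_insert (by simp; omega), sum_pair (by omega), hf0, hfj, hfm]; norm_num
      _ ≤ _ := sum_le (by simp; omega)
  · set c := cos (π / (2 * j + 1 : ℕ))
    have hc : 1 ≤ 2 * c := one_le_two_mul_cos_pi_div (by omega)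
    have hm0 : ((2 * j + 1 : ℕ) : ℝ) ≠ 0 := by positivity
    have hfj : f j = c := by
      simp only [f]
      rw [show 2 * (j : ℝ) * π / (2 * j + 1 : ℕ) = π - π / (2 * j + 1 : ℕ) by
        field_simp; push_cast; ring, cos_pi_sub, abs_neg, abs_of_nonneg (by linarith)]
    have hfj' : f (j + 1) = c := by
      simp only [f]
      rw [show 2 * ((j + 1 : ℕ) : ℝ) * π / (2 * j + 1 : ℕ) = π / (2 * j + 1 : ℕ) + π by
        field_simp; push_cast; ring, cos_add_pi, abs_neg, abs_of_nonneg (by linarith)]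
    calc (3 : ℝ) ≤ 2 + 2 * c := by linarith
      _ = ∑ k ∈ {0, j, j + 1, 2 * j + 1}, f k := by
          rw [sum_insert (by simp; omega), sum_insert (by simp; omega), sum_pair (by omega),
            hf0, hfj, hfj', hfm]; ring
      _ ≤ _ := sum_le (by simp; omega)

/-- For the sign pattern `δ_k = +1` for `0 ≤ k ≤ ⌊m/4⌋`, `δ_k = −1` for
`⌊m/4⌋+1 ≤ k ≤ m−⌊m/4⌋−1`, `δ_k = +1` for `m−⌊m/4⌋ ≤ k ≤ m`, one has
`3 ≤ Σ_{k=0}^m δ_k cos(2kπ/m) ≤ m+1`. -/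
theorem sum_delta_cos_between_three_and_m_add_one
    (m : ℕ) (hm : 2 ≤ m)
    (δ : ℕ → ℝ)
    (hδ1 : ∀ k, k ≤ m / 4 → δ k = 1)
    (hδ2 : ∀ k, m / 4 + 1 ≤ k → k ≤ m - m / 4 - 1 → δ k = -1)
    (hδ3 : ∀ k, m - m / 4 ≤ k → k ≤ m → δ k = 1) :
    3 ≤ ∑ k ∈ Finset.range (m + 1), δ k * Real.cos (2 * k * Real.pi / m) ∧
      ∑ k ∈ Finset.range (m + 1), δ k * Real.cos (2 * k * Real.pi / m) ≤ m + 1 := by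
  have hsum : ∑ k ∈ range (m + 1), δ k * cos (2 * k * π / m) =
      ∑ k ∈ range (m + 1), |cos (2 * k * π / m)| :=
    sum_congr rfl fun k hk =>
      delta_mul_cos_eq_abs_cos (by omega) hδ1 hδ2 hδ3 (Nat.lt_succ_iff.mp (mem_range.mp hk))
  refine hsum ▸ ⟨three_le_sum_abs_cos hm, ?_⟩
  calc ∑ k ∈ range (m + 1), |cos (2 * k * π / m)| ≤ ∑ _k ∈ range (m + 1), (1 : ℝ) :=
        sum_le_sum fun _ _ => abs_cos_le_one _
    _ = m + 1 := by simp
end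

section
/- Let m ≥ 4 be an integer with m ≡ 0 (mod 4), and let δ_0,…,δ_m ∈ {+1,−1} be given by δ_k = +1 for 0 ≤ k ≤ m/4, δ_k = −1 for m/4+1 ≤ k ≤ m−m/4−1, and δ_k = +1 for m−m/4 ≤ k ≤ m. Then the imaginary part of p(m/2) = Σ_{k=0}^{m/2−1} δ_k e^{2kπi/m} equals 1; equivalently, Σ_{k=0}^{m/2−1} δ_k · sin(2kπ/m) = 1. -/
open Complex
open scoped Real

/-!
Write `m = 4n`. The terms `sin (2kπ/m)` are symmetric under `k ↦ 2n - k`, so the negative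
terms `n < k < 2n` cancel the positive terms `0 < k < n`, leaving `sin 0 + sin (π/2) = 1`.
-/

theorem Finset.sum_range_two_mul_sign_mul_eq_of_symm {R : Type*} [CommRing R] {n : ℕ}
    (hn : 1 ≤ n) {δ g : ℕ → R} (hδ_pos : ∀ k ≤ n, δ k = 1)
    (hδ_neg : ∀ k ∈ Finset.Ico (n + 1) (2 * n), δ k = -1)
    (hg : ∀ k ≤ 2 * n, g (2 * n - k) = g k) :
    ∑ k ∈ Finset.range (2 * n), δ k * g k = g 0 + g n := by
  have h_pos :
      ∑ k ∈ Finset.range (n + 1), δ k * g k = g 0 + ∑ k ∈ Finset.Ico 1 n, g k + g n := by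
    rw [Finset.sum_congr rfl fun k hk => by rw [hδ_pos k (by simpa [Nat.lt_succ_iff] using hk),
      one_mul], Finset.sum_range_succ, Finset.sum_range_eq_add_Ico _ hn]
  have h_neg : ∑ k ∈ Finset.Ico (n + 1) (2 * n), δ k * g k = -∑ k ∈ Finset.Ico 1 n, g k := by
    calc ∑ k ∈ Finset.Ico (n + 1) (2 * n), δ k * g k
        = -∑ k ∈ Finset.Ico (n + 1) (2 * n), g (2 * n - k) := by
          rw [← Finset.sum_neg_distrib]
          refine Finset.sum_congr rfl fun k hk => ?_
          rw [hδ_neg k hk, hg k (Finset.mem_Ico.mp hk).2.le, neg_one_mul]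
      _ = -∑ k ∈ Finset.Ico 1 n, g k := by
          rw [Finset.sum_Ico_reflect _ _ (by omega), show 2 * n + 1 - 2 * n = 1 by omega,
            show 2 * n + 1 - (n + 1) = n by omega]
  rw [← Finset.sum_range_add_sum_Ico _ (by omega : n + 1 ≤ 2 * n), h_pos, h_neg]
  ring

theorem Real.sin_two_mul_half_sub_mul_pi_div {m : ℕ} (hm : Even m) {k : ℕ} (hk : k ≤ m / 2) :
    Real.sin (2 * ↑(m / 2 - k) * π / m) = Real.sin (2 * k * π / m) := by
  rcases eq_or_ne m 0 with rfl | hm0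
  · simp
  have hhalf : ((m / 2 : ℕ) : ℝ) = m / 2 := by
    rw [Nat.cast_div (even_iff_two_dvd.mp hm) two_ne_zero]; norm_num
  rw [← Real.sin_pi_sub]
  congr 1
  rw [Nat.cast_sub hk, hhalf]
  field_simp
  ring

theorem Real.sin_two_mul_quarter_mul_pi_div {m : ℕ} (hm : 4 ∣ m) (hm0 : m ≠ 0) :
    Real.sin (2 * ↑(m / 4) * π / m) = 1 := by
  rw [Nat.cast_div hm four_ne_zero, ← Real.sin_pi_div_two]
  congr 1
  field_simp
  norm_num

theorem Complex.im_ofReal_mul_exp_two_pi_I_div (a : ℝ) (k m : ℕ) :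
    ((a : ℂ) * exp (2 * π * I * k / m)).im = a * Real.sin (2 * k * π / m) := by
  rw [im_ofReal_mul, ← exp_ofReal_mul_I_im]
  congr 3
  push_cast
  ring

theorem im_p_half_eq_one_of_mod_four_eq_zero_general
    (m : ℕ) (hm : 4 ≤ m) (hm4 : m % 4 = 0)
    (δ : ℕ → ℝ)
    (hδ1 : ∀ k, k ≤ m / 4 → δ k = 1)
    (hδ2 : ∀ k, m / 4 + 1 ≤ k → k ≤ m - m / 4 - 1 → δ k = -1) :
    (∑ k ∈ Finset.range (m / 2),
        (δ k : ℂ) * Complex.exp (2 * Real.pi * Complex.I * k / m)).im = 1 ∧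
      ∑ k ∈ Finset.range (m / 2), δ k * Real.sin (2 * k * Real.pi / m) = 1 := by
  have hreal : ∑ k ∈ Finset.range (m / 2), δ k * Real.sin (2 * k * π / m) = 1 := by
    have hhalf : m / 2 = 2 * (m / 4) := by omega
    have h_symm : ∀ k ≤ 2 * (m / 4), Real.sin (2 * ↑(2 * (m / 4) - k) * π / m) =
        Real.sin (2 * k * π / m) := fun k hk => by
      rw [← hhalf]
      exact Real.sin_two_mul_half_sub_mul_pi_div (Nat.even_iff.mpr (by omega)) (by omega)
    rw [hhalf, Finset.sum_range_two_mul_sign_mul_eq_of_symm (by omega) hδ1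
      (fun k hk => hδ2 k (Finset.mem_Ico.mp hk).1 (by have := Finset.mem_Ico.mp hk; omega))
      h_symm, Real.sin_two_mul_quarter_mul_pi_div (Nat.dvd_of_mod_eq_zero hm4) (by omega)]
    simp
  refine ⟨?_, hreal⟩
  rw [Complex.im_sum]
  simpa only [Complex.im_ofReal_mul_exp_two_pi_I_div] using hreal

/-- For `m ≡ 0 (mod 4)`, `m ≥ 4`, with the sign pattern `δ_k = +1` for
`0 ≤ k ≤ m/4`, `δ_k = −1` for `m/4+1 ≤ k ≤ m−m/4−1`, `δ_k = +1` for `m−m/4 ≤ k ≤ m`,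
the imaginary part of `p(m/2)` equals `1`; equivalently
`Σ_{k=0}^{m/2−1} δ_k sin(2kπ/m) = 1`. -/
theorem im_p_half_eq_one_of_mod_four_eq_zero
    (m : ℕ) (hm : 4 ≤ m) (hm4 : m % 4 = 0)
    (δ : ℕ → ℝ)
    (hδ1 : ∀ k, k ≤ m / 4 → δ k = 1)
    (hδ2 : ∀ k, m / 4 + 1 ≤ k → k ≤ m - m / 4 - 1 → δ k = -1)
    (hδ3 : ∀ k, m - m / 4 ≤ k → k ≤ m → δ k = 1) :
    (∑ k ∈ Finset.range (m / 2),
        (δ k : ℂ) * Complex.exp (2 * Real.pi * Complex.I * k / m)).im = 1 ∧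
      ∑ k ∈ Finset.range (m / 2), δ k * Real.sin (2 * k * Real.pi / m) = 1 :=
  im_p_half_eq_one_of_mod_four_eq_zero_general m hm hm4 δ hδ1 hδ2
end

section
/- Let m ≥ 2 be an integer with m ≡ 2 (mod 4), and let δ_0,…,δ_m ∈ {+1,−1} be given by δ_k = +1 for 0 ≤ k ≤ ⌊m/4⌋, δ_k = −1 for ⌊m/4⌋+1 ≤ k ≤ m−⌊m/4⌋−1, and δ_k = +1 for m−⌊m/4⌋ ≤ k ≤ m. Then the imaginary part of p(m/2) = Σ_{k=0}^{m/2−1} δ_k e^{2kπi/m} equals 0; equivalently, Σ_{k=0}^{m/2−1} δ_k · sin(2kπ/m) = 0. -/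
open Complex
open scoped Real

/-!
Write `m = 4t + 2`, so the sum runs over `k < n := 2t + 1`. The reflection `k ↦ n - k` preserves
`sin (2kπ/m)`, because `2n = m` turns it into `θ ↦ π - θ`, and it swaps the block of signs `+1`
(`k ≤ t`) with the block of signs `-1` (`t < k ≤ n`). Each term `δ k sin (2kπ/m)` is therefore
odd under the reflection, and the sum vanishes.
-/

theorem Finset.sum_range_eq_zero_of_apply_sub_eq_neg {G : Type*} [AddCommGroup G]
    [IsAddTorsionFree G] (g : ℕ → G) (n : ℕ) (hg : ∀ k ≤ n, g (n - k) = -g k) (hg0 : g 0 = 0) :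
    ∑ k ∈ Finset.range n, g k = 0 := by
  have hgn : g n = 0 := by simpa [hg0] using hg 0 n.zero_le
  have hreflect : ∑ k ∈ Finset.range (n + 1), g k = -∑ k ∈ Finset.range (n + 1), g k := by
    calc ∑ k ∈ Finset.range (n + 1), g k = ∑ k ∈ Finset.range (n + 1), g (n - k) := by
          simpa using (Finset.sum_range_reflect g (n + 1)).symm
      _ = -∑ k ∈ Finset.range (n + 1), g k := by
          rw [← Finset.sum_neg_distrib]
          exact Finset.sum_congr rfl fun k hk => hg k (Finset.mem_range_succ_iff.mp hk)
  simpa [Finset.sum_range_succ, hgn] using self_eq_neg.mp hreflect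

theorem Real.sin_two_mul_mul_pi_div_eq_of_two_mul_add_eq {x y m : ℝ} (hm : m ≠ 0)
    (hxy : 2 * (x + y) = m) : Real.sin (2 * x * π / m) = Real.sin (2 * y * π / m) := by
  have harg : 2 * x * π / m = π - 2 * y * π / m := by
    field_simp
    rw [← hxy]
    ring
  rw [harg, Real.sin_pi_sub]

theorem Complex.im_sum_ofReal_mul_exp_two_pi_I_mul_div (s : Finset ℕ) (a : ℕ → ℝ) (m : ℕ) :
    (∑ k ∈ s, (a k : ℂ) * Complex.exp (2 * π * Complex.I * k / m)).im
      = ∑ k ∈ s, a k * Real.sin (2 * k * π / m) := by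
  rw [Complex.im_sum]
  refine Finset.sum_congr rfl fun k _ => ?_
  have harg : 2 * (π : ℂ) * Complex.I * k / m = ((2 * k * π / m : ℝ) : ℂ) * Complex.I := by
    push_cast
    ring
  rw [harg, Complex.im_ofReal_mul, Complex.exp_ofReal_mul_I_im]

theorem im_p_half_eq_zero_of_mod_four_eq_two_general
    (m : ℕ) (hm4 : m % 4 = 2)
    (δ : ℕ → ℝ)
    (hδ1 : ∀ k, k ≤ m / 4 → δ k = 1)
    (hδ2 : ∀ k, m / 4 + 1 ≤ k → k ≤ m - m / 4 - 1 → δ k = -1) :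
    (∑ k ∈ Finset.range (m / 2),
        (δ k : ℂ) * Complex.exp (2 * Real.pi * Complex.I * k / m)).im = 0 ∧
      ∑ k ∈ Finset.range (m / 2), δ k * Real.sin (2 * k * Real.pi / m) = 0 := by
  have hsin : ∑ k ∈ Finset.range (m / 2), δ k * Real.sin (2 * k * π / m) = 0 := by
    obtain ⟨t, rfl⟩ : ∃ t, m = 4 * t + 2 := ⟨m / 4, by omega⟩
    have hhalf : (4 * t + 2) / 2 = 2 * t + 1 := by omega
    have hsign : ∀ k ≤ 2 * t + 1, δ (2 * t + 1 - k) = -δ k := by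
      intro k hk
      rcases le_or_gt k t with hkt | hkt
      · rw [hδ1 k (by omega), hδ2 _ (by omega) (by omega)]
      · rw [hδ1 _ (by omega), hδ2 k (by omega) (by omega), neg_neg]
    rw [hhalf]
    refine Finset.sum_range_eq_zero_of_apply_sub_eq_neg _ _ (fun k hk => ?_) (by simp)
    rw [hsign k hk, Real.sin_two_mul_mul_pi_div_eq_of_two_mul_add_eq (by positivity)
      (y := k) (by push_cast [Nat.cast_sub hk]; ring), neg_mul]
  exact ⟨(Complex.im_sum_ofReal_mul_exp_two_pi_I_mul_div _ δ m).trans hsin, hsin⟩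

/-- For `m ≡ 2 (mod 4)`, `m ≥ 2`, with the sign pattern `δ_k = +1` for
`0 ≤ k ≤ ⌊m/4⌋`, `δ_k = −1` for `⌊m/4⌋+1 ≤ k ≤ m−⌊m/4⌋−1`, `δ_k = +1` for
`m−⌊m/4⌋ ≤ k ≤ m`, the imaginary part of `p(m/2)` equals `0`; equivalently
`Σ_{k=0}^{m/2−1} δ_k sin(2kπ/m) = 0`. -/
theorem im_p_half_eq_zero_of_mod_four_eq_two
    (m : ℕ) (hm : 2 ≤ m) (hm4 : m % 4 = 2)
    (δ : ℕ → ℝ)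
    (hδ1 : ∀ k, k ≤ m / 4 → δ k = 1)
    (hδ2 : ∀ k, m / 4 + 1 ≤ k → k ≤ m - m / 4 - 1 → δ k = -1)
    (hδ3 : ∀ k, m - m / 4 ≤ k → k ≤ m → δ k = 1) :
    (∑ k ∈ Finset.range (m / 2),
        (δ k : ℂ) * Complex.exp (2 * Real.pi * Complex.I * k / m)).im = 0 ∧
      ∑ k ∈ Finset.range (m / 2), δ k * Real.sin (2 * k * Real.pi / m) = 0 :=
  im_p_half_eq_zero_of_mod_four_eq_two_general m hm4 δ hδ1 hδ2
end

section
/- Let m ≥ 7 be an integer with m ≡ 3 (mod 4), and let δ_0,…,δ_m ∈ {+1,−1} be given by δ_k = +1 for 0 ≤ k ≤ ⌊m/4⌋, δ_k = −1 for ⌊m/4⌋+1 ≤ k ≤ m−⌊m/4⌋−1, and δ_k = +1 for m−⌊m/4⌋ ≤ k ≤ m. Then the imaginary part of p((m+1)/2) = Σ_{k=0}^{(m+1)/2−1} δ_k e^{2kπi/m} is strictly negative; equivalently, Σ_{k=0}^{⌊m/4⌋}( sin(2kπ/m) − sin((2k+1)π/m) ) < 0. -/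
open Complex
open scoped Real

/-! Write `m = 4q + 3`. The first `q + 1` terms of `p((m+1)/2)` carry the sign `+1` and the
next `q + 1` the sign `-1`; since `2(q + 1 + j) + (2(q - j) + 1) = m`, the identity
`sin (π - x) = sin x` turns the negative half into `-Σ_{k ≤ q} sin((2k+1)π/m)`. Hence the
imaginary part is exactly the real sum `Σ_{k ≤ q} (sin(2kπ/m) - sin((2k+1)π/m))`, each of whose
terms is negative because `sin` is increasing on `[0, π/2]` and `(2k+1)π/m ≤ π/2`. -/

namespace Real

theorem sin_mul_pi_div_eq_of_add_eq {a b M : ℝ} (h : a + b = M) (hM : M ≠ 0) :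
    sin (a * π / M) = sin (b * π / M) := by
  have hangle : a * π / M = π - b * π / M := by
    rw [← h] at hM ⊢
    field_simp
    ring
  rw [hangle, sin_pi_sub]

theorem sin_two_mul_pi_div_lt_sin_two_mul_add_one_pi_div {M : ℝ} {k : ℕ} (hk : 4 * k + 2 ≤ M) :
    sin (2 * k * π / M) < sin ((2 * k + 1) * π / M) := by
  have hM : 0 < M := by linarith [(Nat.cast_nonneg k : (0 : ℝ) ≤ k)]
  apply sin_lt_sin_of_lt_of_le_pi_div_two
  · have : 0 ≤ 2 * (k : ℝ) * π / M := by positivity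
    linarith [pi_pos]
  · rw [div_le_div_iff₀ hM two_pos]
    nlinarith [pi_pos]
  · gcongr
    linarith

theorem sum_range_sin_two_mul_pi_div_sub_neg {M : ℝ} {q : ℕ} (hq : 4 * q + 2 ≤ M) :
    ∑ k ∈ Finset.range (q + 1), (sin (2 * k * π / M) - sin ((2 * k + 1) * π / M)) < 0 := by
  refine Finset.sum_neg (fun k hk => ?_) ⟨0, by simp⟩
  have hkq : (k : ℝ) ≤ q := by exact_mod_cast Nat.lt_succ_iff.mp (Finset.mem_range.mp hk)
  exact sub_neg.mpr (sin_two_mul_pi_div_lt_sin_two_mul_add_one_pi_div (by linarith))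

end Real

theorem Complex.im_ofReal_mul_exp_two_pi_I_mul_div (r : ℝ) (k m : ℕ) :
    ((r : ℂ) * exp (2 * π * I * k / m)).im = r * Real.sin (2 * k * π / m) := by
  have harg : (2 * π * I * k / m : ℂ) = ((2 * k * π / m : ℝ) : ℂ) * I := by
    push_cast
    ring
  rw [harg, mul_im, exp_ofReal_mul_I_im, exp_ofReal_mul_I_re, ofReal_re, ofReal_im]
  ring

theorem im_sum_sign_mul_exp_eq_sum_sin_sub_sin {m q : ℕ} (hm : m = 4 * q + 3) {δ : ℕ → ℝ}
    (hδ_pos : ∀ k ≤ q, δ k = 1) (hδ_neg : ∀ k, q < k → k ≤ 2 * q + 1 → δ k = -1) :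
    (∑ k ∈ Finset.range ((m + 1) / 2), (δ k : ℂ) * exp (2 * π * I * k / m)).im =
      ∑ k ∈ Finset.range (q + 1),
        (Real.sin (2 * k * π / m) - Real.sin ((2 * k + 1) * π / m)) := by
  have hhalf : (m + 1) / 2 = (q + 1) + (q + 1) := by omega
  have hm0 : (m : ℝ) ≠ 0 := Nat.cast_ne_zero.mpr (by omega)
  have hfirst : ∀ k ∈ Finset.range (q + 1),
      δ k * Real.sin (2 * k * π / m) = Real.sin (2 * k * π / m) := fun k hk => by
    rw [hδ_pos k (Nat.lt_succ_iff.mp (Finset.mem_range.mp hk)), one_mul]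
  have hsecond : ∀ j ∈ Finset.range (q + 1),
      δ (q + 1 + j) * Real.sin (2 * (q + 1 + j : ℕ) * π / m) =
        -Real.sin ((2 * (q + 1 - 1 - j : ℕ) + 1) * π / m) := fun j hj => by
    have hjq : j ≤ q := Nat.lt_succ_iff.mp (Finset.mem_range.mp hj)
    rw [hδ_neg _ (by omega) (by omega), neg_one_mul,
      Real.sin_mul_pi_div_eq_of_add_eq _ hm0]
    rw [show q + 1 - 1 - j = q - j by omega, Nat.cast_sub hjq, hm]
    push_cast
    ring
  rw [im_sum, hhalf, Finset.sum_range_add]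
  simp only [im_ofReal_mul_exp_two_pi_I_mul_div]
  rw [Finset.sum_congr rfl hfirst, Finset.sum_congr rfl hsecond, Finset.sum_neg_distrib,
    Finset.sum_range_reflect (fun k => Real.sin ((2 * (k : ℕ) + 1) * π / m)) (q + 1),
    Finset.sum_sub_distrib, sub_eq_add_neg]

theorem im_p_half_neg_of_mod_four_eq_three_general
    (m : ℕ) (hm4 : m % 4 = 3)
    (δ : ℕ → ℝ)
    (hδ1 : ∀ k, k ≤ m / 4 → δ k = 1)
    (hδ2 : ∀ k, m / 4 + 1 ≤ k → k ≤ m - m / 4 - 1 → δ k = -1) :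
    (∑ k ∈ Finset.range ((m + 1) / 2),
        (δ k : ℂ) * Complex.exp (2 * Real.pi * Complex.I * k / m)).im < 0 ∧
      ∑ k ∈ Finset.range (m / 4 + 1),
        (Real.sin (2 * k * Real.pi / m) - Real.sin ((2 * k + 1) * Real.pi / m)) < 0 := by
  have hm : m = 4 * (m / 4) + 3 := by omega
  have hsum := Real.sum_range_sin_two_mul_pi_div_sub_neg (M := m) (q := m / 4) <| by
    rw [show (m : ℝ) = 4 * (m / 4 : ℕ) + 3 by exact_mod_cast hm]
    linarith
  refine ⟨?_, hsum⟩
  rw [im_sum_sign_mul_exp_eq_sum_sin_sub_sin hm hδ1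
    (fun k hk hk' => hδ2 k hk (by omega))]
  exact hsum

/-- For `m ≡ 3 (mod 4)`, `m ≥ 7`, with the sign pattern `δ_k = +1` for
`0 ≤ k ≤ ⌊m/4⌋`, `δ_k = −1` for `⌊m/4⌋+1 ≤ k ≤ m−⌊m/4⌋−1`, `δ_k = +1` for
`m−⌊m/4⌋ ≤ k ≤ m`, the imaginary part of `p((m+1)/2)` is strictly negative;
equivalently `Σ_{k=0}^{⌊m/4⌋}(sin(2kπ/m) − sin((2k+1)π/m)) < 0`. -/
theorem im_p_half_neg_of_mod_four_eq_three
    (m : ℕ) (hm : 7 ≤ m) (hm4 : m % 4 = 3)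
    (δ : ℕ → ℝ)
    (hδ1 : ∀ k, k ≤ m / 4 → δ k = 1)
    (hδ2 : ∀ k, m / 4 + 1 ≤ k → k ≤ m - m / 4 - 1 → δ k = -1)
    (hδ3 : ∀ k, m - m / 4 ≤ k → k ≤ m → δ k = 1) :
    (∑ k ∈ Finset.range ((m + 1) / 2),
        (δ k : ℂ) * Complex.exp (2 * Real.pi * Complex.I * k / m)).im < 0 ∧
      ∑ k ∈ Finset.range (m / 4 + 1),
        (Real.sin (2 * k * Real.pi / m) - Real.sin ((2 * k + 1) * Real.pi / m)) < 0 :=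
  im_p_half_neg_of_mod_four_eq_three_general m hm4 δ hδ1 hδ2
end
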